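/- arXiv:2102.08151 — 3 statements merged into one kernel-verified Lean document; each statement's English description precedes it below -/
import Mathlib

section
/- Let D be a commutative ring with a ring endomorphism φ and a map δ : D → D such that φ(x) = x^p + p·δ(x) for all x ∈ D. Let q ∈ D and [p]_q = Σ_{i=0}^{p-1} q^i, and let I ⊆ D be an ideal such that φ(f) − [p]_q·δ(f) ∈ [p]_q·I for all f ∈ I. Then for every f ∈ I one has f^p ∈ (p, [p]_q). In particular, the image of I in D/(p, [p]_q) consists of nilpotent elements. -/
/-- Under the δ-ring identity and the q-PD condition, `f^p ∈ (p, [p]_q)` for every `f ∈ I`;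
in particular the image of `I` in `D/(p, [p]_q)` consists of nilpotent elements. -/
theorem stmt6 (p : ℕ) (hp : p.Prime) {D : Type*} [CommRing D] (q : D)
    (φ : D →+* D) (δ : D → D) (hδ : ∀ x : D, φ x = x ^ p + (p : D) * δ x)
    (I : Ideal D)
    (hqpd : ∀ f ∈ I, ∃ y ∈ I,
      φ f - (∑ i ∈ Finset.range p, q ^ i) * δ f = (∑ i ∈ Finset.range p, q ^ i) * y) :
    ∀ f ∈ I, f ^ p ∈ Ideal.span {(p : D), ∑ i ∈ Finset.range p, q ^ i} ∧
      IsNilpotent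
        (Ideal.Quotient.mk (Ideal.span {(p : D), ∑ i ∈ Finset.range p, q ^ i}) f) := by
  intro f hf
  obtain ⟨y, hy, hxy⟩ := hqpd f hf
  have hfp : f ^ p = (-(δ f)) * (p : D) +
      (y + δ f) * (∑ i ∈ Finset.range p, q ^ i) := by
    have := hδ f
    linear_combination hxy - this
  have hmem : f ^ p ∈ Ideal.span {(p : D), ∑ i ∈ Finset.range p, q ^ i} := by
    rw [Ideal.mem_span_pair]
    exact ⟨-(δ f), y + δ f, hfp.symm⟩
  refine ⟨hmem, ⟨p, ?_⟩⟩
  rw [← map_pow, Ideal.Quotient.eq_zero_iff_mem]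
  exact hmem
end

section
/- Let D be a commutative ring with no p-torsion, φ : D → D a ring endomorphism, and δ : D → D a map with φ(x) = x^p + p·δ(x) for all x. Let I ⊆ D be an ideal with p ∈ I and x^p ∈ p·I for all x ∈ I. Fix m ≥ 0 and set J := (φ^m)⁻¹(I). Then: (1) x^{p^m} ∈ I for every x ∈ J; (2) I ⊆ J; (3) consequently J^{(p^m)} + pJ ⊆ I ⊆ J, where J^{(p^m)} is the ideal generated by x^{p^m} for x ∈ J. -/
/-!
Since `p ∈ I`, the identity `φ x = x ^ p + p δ x` says that `φ` lifts the Frobenius of `D ⧸ I`,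
so `φ ^ m` lifts `x ↦ x ^ p ^ m` and `x ^ p ^ m ≡ (φ ^ m) x ≡ 0 (mod I)` for `x ∈ J`.
Conversely `x ^ p ∈ p I ⊆ I` for `x ∈ I` gives `φ I ⊆ I`, hence `I ⊆ J`.
-/

section FrobeniusLift

variable {D : Type*} [CommRing D] (p : ℕ) (φ : D →+* D) (I : Ideal D)

theorem Ideal.Quotient.mk_apply_eq_pow_of_eq_add_mul {δ : D → D}
    (hδ : ∀ x : D, φ x = x ^ p + (p : D) * δ x) (hpI : (p : D) ∈ I) (x : D) :
    Ideal.Quotient.mk I (φ x) = Ideal.Quotient.mk I x ^ p := by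
  rw [hδ, map_add, map_mul, map_pow, Ideal.Quotient.eq_zero_iff_mem.mpr hpI, zero_mul, add_zero]

theorem Ideal.Quotient.mk_pow_apply_eq_pow_pow
    (hφ : ∀ x : D, Ideal.Quotient.mk I (φ x) = Ideal.Quotient.mk I x ^ p) (n : ℕ) (x : D) :
    Ideal.Quotient.mk I ((φ ^ n) x) = Ideal.Quotient.mk I x ^ p ^ n := by
  induction n generalizing x with
  | zero => simp
  | succ n ih =>
    rw [pow_succ, RingHom.mul_def, RingHom.comp_apply, ih, hφ, pow_succ', pow_mul]

theorem pow_pow_mem_of_mem_comap_pow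
    (hφ : ∀ x : D, Ideal.Quotient.mk I (φ x) = Ideal.Quotient.mk I x ^ p) (n : ℕ) {x : D}
    (hx : x ∈ I.comap (φ ^ n)) : x ^ p ^ n ∈ I := by
  rw [← Ideal.Quotient.eq_zero_iff_mem, map_pow,
    ← Ideal.Quotient.mk_pow_apply_eq_pow_pow p φ I hφ, Ideal.Quotient.eq_zero_iff_mem]
  exact hx

theorem Ideal.mapsTo_of_eq_pow_add_mul {δ : D → D}
    (hδ : ∀ x : D, φ x = x ^ p + (p : D) * δ x) (hpI : (p : D) ∈ I)
    (hpow : ∀ x ∈ I, x ^ p ∈ I) : Set.MapsTo φ I I := fun x hx => by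
  rw [hδ]
  exact add_mem (hpow x hx) (I.mul_mem_right _ hpI)

end FrobeniusLift

theorem stmt7_general (p : ℕ) {D : Type*} [CommRing D]
    (φ : D →+* D) (δ : D → D) (hδ : ∀ x : D, φ x = x ^ p + (p : D) * δ x)
    (I : Ideal D) (hpI : (p : D) ∈ I) (hpd : ∀ x ∈ I, ∃ y ∈ I, x ^ p = (p : D) * y)
    (m : ℕ) :
    (∀ x ∈ Ideal.comap (φ ^ m) I, x ^ p ^ m ∈ I) ∧
    I ≤ Ideal.comap (φ ^ m) I ∧
    Ideal.span ((fun x => x ^ p ^ m) '' (Ideal.comap (φ ^ m) I : Set D))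
        ⊔ Ideal.span {(p : D)} * Ideal.comap (φ ^ m) I ≤ I := by
  have hφ := Ideal.Quotient.mk_apply_eq_pow_of_eq_add_mul p φ I hδ hpI
  have hJ : ∀ x ∈ I.comap (φ ^ m), x ^ p ^ m ∈ I := fun x hx =>
    pow_pow_mem_of_mem_comap_pow p φ I hφ m hx
  have hpow : ∀ x ∈ I, x ^ p ∈ I := fun x hx => by
    obtain ⟨y, hy, hxy⟩ := hpd x hx
    exact hxy ▸ I.mul_mem_left _ hy
  have hIJ : I ≤ I.comap (φ ^ m) := fun x hx =>
    (Ideal.mapsTo_of_eq_pow_add_mul p φ I hδ hpI hpow).iterate m hx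
  refine ⟨hJ, hIJ, sup_le ?_ ?_⟩
  · rw [Ideal.span_le]
    rintro _ ⟨x, hx, rfl⟩
    exact hJ x hx
  · exact Ideal.mul_le_left.trans ((Ideal.span_singleton_le_iff_mem I).mpr hpI)

/-- For a p-torsion free δ-ring with ideal `I ∋ p` satisfying `x^p ∈ pI` for `x ∈ I`, and
`J = (φ^m)⁻¹(I)`: (1) `x^(p^m) ∈ I` for `x ∈ J`; (2) `I ⊆ J`;
(3) `J^{(p^m)} + pJ ⊆ I ⊆ J`. -/
theorem stmt7 (p : ℕ) (hp : p.Prime) {D : Type*} [CommRing D]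
    (htf : ∀ x : D, (p : D) * x = 0 → x = 0)
    (φ : D →+* D) (δ : D → D) (hδ : ∀ x : D, φ x = x ^ p + (p : D) * δ x)
    (I : Ideal D) (hpI : (p : D) ∈ I) (hpd : ∀ x ∈ I, ∃ y ∈ I, x ^ p = (p : D) * y)
    (m : ℕ) :
    (∀ x ∈ Ideal.comap (φ ^ m) I, x ^ p ^ m ∈ I) ∧
    I ≤ Ideal.comap (φ ^ m) I ∧
    Ideal.span ((fun x => x ^ p ^ m) '' (Ideal.comap (φ ^ m) I : Set D))
        ⊔ Ideal.span {(p : D)} * Ideal.comap (φ ^ m) I ≤ I :=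
  stmt7_general p φ δ hδ I hpI hpd m
end

section
/- Let D be a commutative ring and I an ideal with p ∈ I. Then the set J_max := { x ∈ D : x^{p^m} ∈ I } is an ideal of D. Moreover, J_max^{(p^m)} + p·J_max ⊆ I, and any ideal J of D with J^{(p^m)} ⊆ I satisfies J ⊆ J_max; i.e., J_max is the largest ideal J with J^{(p^m)} + pJ ⊆ I. If moreover I admits a divided power structure (so that x^{p^m} = (p^m)!·γ_{p^m}(x) ∈ I for x ∈ I), then I ⊆ J_max. -/
/-!
Since `p ∈ I`, the map `x ↦ x ^ p ^ m` is additive modulo `I`: `(x + y) ^ p ^ m` differs from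
`x ^ p ^ m + y ^ p ^ m` by a multiple of `p`, because `p` divides every binomial coefficient
`(p ^ m).choose i` with `0 < i < p ^ m`. Hence `J_max`, the preimage of `I` under this map, is an
ideal; the maximality and divided-power statements are then immediate.
-/

namespace Ideal

variable {D : Type*} [CommRing D] {p : ℕ}

theorem add_pow_prime_pow_mem (hp : p.Prime) {I : Ideal D} (hpI : (p : D) ∈ I) (m : ℕ)
    {x y : D} (hx : x ^ p ^ m ∈ I) (hy : y ^ p ^ m ∈ I) : (x + y) ^ p ^ m ∈ I := by
  obtain ⟨r, hr⟩ := exists_add_pow_prime_pow_eq hp x y m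
  rw [hr]
  exact I.add_mem (I.add_mem hx hy) (I.mul_mem_right _ (I.mul_mem_right _ (I.mul_mem_right _ hpI)))

def powPrimePowPreimage (I : Ideal D) (hp : p.Prime) (hpI : (p : D) ∈ I) (m : ℕ) : Ideal D where
  carrier := {x | x ^ p ^ m ∈ I}
  zero_mem' := by
    show (0 : D) ^ p ^ m ∈ I
    rw [zero_pow (pow_ne_zero m hp.ne_zero)]
    exact I.zero_mem
  add_mem' := add_pow_prime_pow_mem hp hpI m
  smul_mem' c x hx := by
    show (c * x) ^ p ^ m ∈ I
    rw [mul_pow]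
    exact I.mul_mem_left _ hx

variable {I : Ideal D} {hp : p.Prime} {hpI : (p : D) ∈ I} {m : ℕ}

theorem mem_powPrimePowPreimage {x : D} :
    x ∈ I.powPrimePowPreimage hp hpI m ↔ x ^ p ^ m ∈ I :=
  Iff.rfl

theorem span_image_pow_le_iff_le_powPrimePowPreimage {J : Ideal D} :
    span ((fun x => x ^ p ^ m) '' (J : Set D)) ≤ I ↔ J ≤ I.powPrimePowPreimage hp hpI m := by
  rw [span_le, Set.image_subset_iff]
  rfl

end Ideal

open Ideal in
/-- `J_max = {x : x^(p^m) ∈ I}` is an ideal, satisfies `J_max^{(p^m)} + p·J_max ⊆ I`, is the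
largest ideal `J` with `J^{(p^m)} ⊆ I`, and contains `I` if `I` has divided powers. -/
theorem stmt8 (p : ℕ) (hp : p.Prime) (m : ℕ) {D : Type*} [CommRing D]
    (I : Ideal D) (hpI : (p : D) ∈ I) :
    ∃ Jmax : Ideal D,
      (∀ x : D, x ∈ Jmax ↔ x ^ p ^ m ∈ I) ∧
      Ideal.span ((fun x => x ^ p ^ m) '' (Jmax : Set D))
          ⊔ Ideal.span {(p : D)} * Jmax ≤ I ∧
      (∀ J : Ideal D, Ideal.span ((fun x => x ^ p ^ m) '' (J : Set D)) ≤ I → J ≤ Jmax) ∧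
      ((∀ x ∈ I, ∃ y ∈ I, x ^ p ^ m = ((p ^ m).factorial : D) * y) → I ≤ Jmax) := by
  refine ⟨I.powPrimePowPreimage hp hpI m, fun _ => mem_powPrimePowPreimage,
    sup_le (span_image_pow_le_iff_le_powPrimePowPreimage.2 le_rfl)
      (mul_le_left.trans ((span_singleton_le_iff_mem I).2 hpI)),
    fun _ => span_image_pow_le_iff_le_powPrimePowPreimage.1, fun hdiv x hx => ?_⟩
  obtain ⟨y, hy, hxy⟩ := hdiv x hx
  rw [mem_powPrimePowPreimage, hxy]
  exact I.mul_mem_left _ hy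
end
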